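/- arXiv:2504.05010 — 2 statements merged into one kernel-verified Lean document; each statement's English description precedes it below -/
import Mathlib

section
/- Fix an integer n ≥ 3 and a real R > 0. If θ₁, …, θ_n ∈ (0, π) satisfy θ₁ + ⋯ + θ_n = 2π, then ∑ᵢ 2·arsinh(sin(θᵢ/2)·sinh(R)) ≤ 2n·arsinh(sin(π/n)·sinh(R)), with equality iff all θᵢ = 2π/n. (This is the perimeter inequality for centered cyclic hyperbolic n-gons of circumradius R.) -/
open Real

noncomputable def artanh (x : ℝ) : ℝ := Real.log ((1 + x) / (1 - x)) / 2

noncomputable def arccot (x : ℝ) : ℝ := Real.pi / 2 - Real.arctan x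

noncomputable def arcosh (x : ℝ) : ℝ := Real.log (x + Real.sqrt (x ^ 2 - 1))

/-!
The perimeter is `2 ∑ᵢ F(θᵢ)` with `F θ = arsinh (sin (θ/2) · sinh R)`. On `[0, 2π]` the map
`θ ↦ sin (θ/2) · sinh R` is strictly concave with nonnegative values, and `arsinh` is increasing and
concave on `[0, ∞)`, so `F` is strictly concave there. Jensen's inequality with equal weights,
together with its equality case, gives the claim, the average angle being `2π/n`.
-/

open Finset

section LinearOrderedField

variable {𝕜 E ι : Type*} [Field 𝕜] [LinearOrder 𝕜] [IsStrictOrderedRing 𝕜]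
  [AddCommGroup E] [Module 𝕜 E] {s : Set E} {f : E → 𝕜} {t : Finset ι} {p : ι → E}

lemma Finset.sum_inv_card_eq_one (ht : t.Nonempty) : ∑ _i ∈ t, (#t : 𝕜)⁻¹ = 1 := by
  rw [sum_const, nsmul_eq_mul, mul_inv_cancel₀ (by exact_mod_cast ht.card_ne_zero)]

lemma ConcaveOn.sum_le_card_mul_map_average (hf : ConcaveOn 𝕜 s f) (ht : t.Nonempty)
    (hp : ∀ i ∈ t, p i ∈ s) :
    ∑ i ∈ t, f (p i) ≤ #t * f ((#t : 𝕜)⁻¹ • ∑ i ∈ t, p i) := by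
  have hcard : (0 : 𝕜) < #t := by exact_mod_cast ht.card_pos
  have hJ := hf.le_map_sum (fun _ _ ↦ inv_nonneg.2 hcard.le) (sum_inv_card_eq_one ht) hp
  simp only [smul_eq_mul, ← mul_sum, ← smul_sum] at hJ
  rwa [inv_mul_le_iff₀ hcard] at hJ

lemma StrictConcaveOn.sum_eq_card_mul_map_average_iff (hf : StrictConcaveOn 𝕜 s f)
    (ht : t.Nonempty) (hp : ∀ i ∈ t, p i ∈ s) :
    ∑ i ∈ t, f (p i) = #t * f ((#t : 𝕜)⁻¹ • ∑ i ∈ t, p i) ↔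
      ∀ j ∈ t, p j = (#t : 𝕜)⁻¹ • ∑ i ∈ t, p i := by
  have hcard : (0 : 𝕜) < #t := by exact_mod_cast ht.card_pos
  have hJ := hf.map_sum_eq_iff (fun _ _ ↦ inv_pos.2 hcard) (sum_inv_card_eq_one ht) hp
  simp only [smul_eq_mul, ← mul_sum, ← smul_sum] at hJ
  rw [← hJ, eq_comm, eq_inv_mul_iff_mul_eq₀ hcard.ne']

lemma StrictConcaveOn.mul_const {c : 𝕜} (hf : StrictConcaveOn 𝕜 s f) (hc : 0 < c) :
    StrictConcaveOn 𝕜 s fun x ↦ f x * c := by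
  refine ⟨hf.1, fun x hx y hy hxy a b ha hb hab ↦ ?_⟩
  have h := mul_lt_mul_of_pos_right (hf.2 hx hy hxy ha hb hab) hc
  simp only [smul_eq_mul] at h ⊢
  linarith

end LinearOrderedField

lemma ConcaveOn.comp_strictConcaveOn_of_mapsTo {𝕜 E β α : Type*} [Semiring 𝕜] [PartialOrder 𝕜]
    [AddCommMonoid E] [AddCommMonoid β] [PartialOrder β] [AddCommMonoid α] [PartialOrder α]
    [SMul 𝕜 E] [SMul 𝕜 β] [SMul 𝕜 α] {s : Set E} {T : Set β} {f : E → β} {g : β → α}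
    (hg : ConcaveOn 𝕜 T g) (hg' : StrictMonoOn g T) (hf : StrictConcaveOn 𝕜 s f)
    (hfT : Set.MapsTo f s T) : StrictConcaveOn 𝕜 s (g ∘ f) := by
  refine ⟨hf.1, fun x hx y hy hxy a b ha hb hab ↦ ?_⟩
  have hcomb : a • f x + b • f y ∈ T := hg.1 (hfT hx) (hfT hy) ha.le hb.le hab
  calc a • g (f x) + b • g (f y) ≤ g (a • f x + b • f y) :=
        hg.2 (hfT hx) (hfT hy) ha.le hb.le hab
    _ < g (f (a • x + b • y)) :=
        hg' hcomb (hfT (hf.1 hx hy ha.le hb.le hab)) (hf.2 hx hy hxy ha hb hab)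

lemma Real.concaveOn_arsinh : ConcaveOn ℝ (Set.Ici 0) arsinh := by
  refine AntitoneOn.concaveOn_of_deriv (convex_Ici 0) continuous_arsinh.continuousOn
    differentiable_arsinh.differentiableOn fun x hx y hy hxy ↦ ?_
  rw [interior_Ici] at hx hy
  simp only [(hasDerivAt_arsinh _).deriv]
  gcongr
  exact hx.le

lemma Real.strictConcaveOn_sin_half :
    StrictConcaveOn ℝ (Set.Icc 0 (2 * π)) fun x ↦ sin (x / 2) := by
  refine ⟨convex_Icc _ _, fun x hx y hy hxy a b ha hb hab ↦ ?_⟩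
  have hhalf {z : ℝ} (hz : z ∈ Set.Icc 0 (2 * π)) : z / 2 ∈ Set.Icc 0 π :=
    ⟨by linarith [hz.1], by linarith [hz.2]⟩
  have h :=
    strictConcaveOn_sin_Icc.2 (hhalf hx) (hhalf hy) (by contrapose! hxy; linarith) ha hb hab
  simp only [smul_eq_mul] at h ⊢
  convert h using 2
  ring

lemma Real.strictConcaveOn_arsinh_sin_half_mul {c : ℝ} (hc : 0 < c) :
    StrictConcaveOn ℝ (Set.Icc 0 (2 * π)) fun x ↦ arsinh (sin (x / 2) * c) :=
  concaveOn_arsinh.comp_strictConcaveOn_of_mapsTo (arsinh_strictMono.strictMonoOn _)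
    (strictConcaveOn_sin_half.mul_const hc) fun x hx ↦
      mul_nonneg (sin_nonneg_of_nonneg_of_le_pi (by linarith [hx.1]) (by linarith [hx.2])) hc.le

theorem stmt7_general (n : ℕ) (R : ℝ) (hR : 0 < R)
    (θ : Fin n → ℝ) (hθ : ∀ i, θ i ∈ Set.Ioo 0 π)
    (hsum : ∑ i, θ i = 2 * π) :
    ∑ i, 2 * Real.arsinh (Real.sin (θ i / 2) * Real.sinh R)
      ≤ 2 * n * Real.arsinh (Real.sin (π / n) * Real.sinh R) ∧
    (∑ i, 2 * Real.arsinh (Real.sin (θ i / 2) * Real.sinh R)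
      = 2 * n * Real.arsinh (Real.sin (π / n) * Real.sinh R) ↔ ∀ i, θ i = 2 * π / n) := by
  have hF := strictConcaveOn_arsinh_sin_half_mul (sinh_pos_iff.2 hR)
  have : NeZero n := ⟨by rintro rfl; simp [pi_ne_zero] at hsum⟩
  have hne : (univ : Finset (Fin n)).Nonempty := univ_nonempty
  have hmem : ∀ i ∈ univ, θ i ∈ Set.Icc 0 (2 * π) :=
    fun i _ ↦ ⟨(hθ i).1.le, by linarith [(hθ i).2, pi_pos]⟩
  have havg : (n : ℝ)⁻¹ • ∑ i, θ i = 2 * π / n := by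
    rw [hsum, smul_eq_mul]
    ring
  have hhalf : 2 * π / n / 2 = π / n := by ring
  have hle := hF.concaveOn.sum_le_card_mul_map_average hne hmem
  have heq := hF.sum_eq_card_mul_map_average_iff hne hmem
  simp only [card_univ, Fintype.card_fin, mem_univ, true_imp_iff] at hle heq
  rw [havg, hhalf] at hle heq
  rw [← mul_sum, mul_assoc]
  exact ⟨by linarith, by rw [mul_right_inj' two_ne_zero, heq]⟩

theorem stmt7 (n : ℕ) (hn : 3 ≤ n) (R : ℝ) (hR : 0 < R)
    (θ : Fin n → ℝ) (hθ : ∀ i, θ i ∈ Set.Ioo 0 π)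
    (hsum : ∑ i, θ i = 2 * π) :
    ∑ i, 2 * Real.arsinh (Real.sin (θ i / 2) * Real.sinh R)
      ≤ 2 * n * Real.arsinh (Real.sin (π / n) * Real.sinh R) ∧
    (∑ i, 2 * Real.arsinh (Real.sin (θ i / 2) * Real.sinh R)
      = 2 * n * Real.arsinh (Real.sin (π / n) * Real.sinh R) ↔ ∀ i, θ i = 2 * π / n) :=
  stmt7_general n R hR θ hθ hsum
end

section
/- For fixed n ≥ 3, the function g(r) = artanh(tan(π/n)·sinh(r)) is strictly convex on the interval of r > 0 where tan(π/n)·sinh(r) < 1. -/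
open Real

/-!
`r ↦ t sinh r` is strictly convex on `r ≥ 0` (its derivative `t cosh r` is strictly increasing),
and `artanh` is convex and strictly increasing on `[0, 1)` (its derivative `1 / (1 - x²)` is
strictly increasing there). A convex, strictly increasing function of a strictly convex one is
strictly convex.
-/

open Set

lemma artanh_eq_real_artanh {x : ℝ} (hx : x ∈ Icc (-1) 1) :
    _root_.artanh x = Real.artanh x := by
  rw [Real.artanh_eq_half_log hx, _root_.artanh]
  ring

lemma hasDerivAt_artanh {x : ℝ} (hx : x ∈ Ioo (-1) 1) :
    HasDerivAt _root_.artanh (1 / (1 - x ^ 2)) x := by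
  have h1 : 0 < 1 + x := by linarith [hx.1]
  have h2 : 0 < 1 - x := by linarith [hx.2]
  have hq : HasDerivAt (fun y => (1 + y) / (1 - y)) (2 / (1 - x) ^ 2) x :=
    (((hasDerivAt_id' x).const_add 1).div ((hasDerivAt_id' x).const_sub 1) h2.ne').congr_deriv
      (by ring)
  refine ((hq.log (div_pos h1 h2).ne').div_const 2).congr_deriv ?_
  rw [show 1 - x ^ 2 = (1 + x) * (1 - x) by ring]
  field_simp

lemma strictConvexOn_artanh : StrictConvexOn ℝ (Ico 0 1) _root_.artanh := by
  have hsub : Ico (0 : ℝ) 1 ⊆ Ioo (-1) 1 := Ico_subset_Ioo_left (by norm_num)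
  refine StrictMonoOn.strictConvexOn_of_deriv (convex_Ico 0 1)
    (fun x hx => (hasDerivAt_artanh (hsub hx)).continuousAt.continuousWithinAt) ?_
  rw [interior_Ico]
  intro x hx y hy hxy
  rw [(hasDerivAt_artanh (hsub (Ioo_subset_Ico_self hx))).deriv,
    (hasDerivAt_artanh (hsub (Ioo_subset_Ico_self hy))).deriv]
  have hy2 : y ^ 2 < 1 := by nlinarith [hy.1, hy.2]
  exact one_div_lt_one_div_of_lt (by linarith) (by nlinarith [hx.1])

lemma strictConvexOn_const_mul_sinh {t : ℝ} (ht : 0 < t) :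
    StrictConvexOn ℝ (Ici 0) (fun r => t * sinh r) := by
  refine StrictMonoOn.strictConvexOn_of_deriv (convex_Ici 0)
    (continuous_const.mul continuous_sinh).continuousOn ?_
  rw [interior_Ici]
  intro x hx y hy hxy
  simp only [deriv_const_mul_field', Real.deriv_sinh]
  exact mul_lt_mul_of_pos_left (cosh_strictMonoOn (mem_Ici.2 hx.le) (mem_Ici.2 hy.le) hxy) ht

lemma strictConvexOn_artanh_const_mul_sinh {t : ℝ} (ht : 0 < t) :
    StrictConvexOn ℝ {r : ℝ | 0 < r ∧ t * sinh r < 1}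
      (fun r => _root_.artanh (t * sinh r)) := by
  set f : ℝ → ℝ := fun r => t * sinh r
  set s : Set ℝ := {r : ℝ | 0 < r ∧ t * sinh r < 1}
  have hf := strictConvexOn_const_mul_sinh ht
  have hs : Convex ℝ s := (hf.convexOn.subset Ioi_subset_Ici_self (convex_Ioi 0)).convex_lt 1
  have hfs : StrictConvexOn ℝ s f := hf.subset (fun r hr => hr.1.le) hs
  have hmaps : f '' s ⊆ Ico 0 1 := by
    rintro _ ⟨r, ⟨hr, hr1⟩, rfl⟩
    exact ⟨(mul_pos ht (sinh_pos_iff.2 hr)).le, hr1⟩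
  have himage : Convex ℝ (f '' s) :=
    (hs.isPreconnected.image f (continuous_const.mul continuous_sinh).continuousOn).convex
  have hmono : StrictMonoOn _root_.artanh (f '' s) :=
    (Real.strictMonoOn_artanh.congr fun x hx =>
      (artanh_eq_real_artanh (Ioo_subset_Icc_self hx)).symm).mono
        (hmaps.trans (Ico_subset_Ioo_left (by norm_num)))
  exact (strictConvexOn_artanh.convexOn.subset hmaps himage).comp_strictConvexOn hfs hmono

theorem stmt12 (n : ℕ) (hn : 3 ≤ n) :
    StrictConvexOn ℝ {r : ℝ | 0 < r ∧ Real.tan (π / n) * Real.sinh r < 1}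
      (fun r => _root_.artanh (Real.tan (π / n) * Real.sinh r)) := by
  have hn' : (3 : ℝ) ≤ n := by exact_mod_cast hn
  refine strictConvexOn_artanh_const_mul_sinh (tan_pos_of_pos_of_lt_pi_div_two (by positivity) ?_)
  rw [div_lt_div_iff₀ (by positivity) two_pos]
  nlinarith [pi_pos]
end
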